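/- arXiv:1207.3120 — 3 statements merged into one kernel-verified Lean document; each statement's English description precedes it below -/
import Mathlib

section
/- Let H be a Hilbert space, T a nonzero trace-class operator on H with ‖T‖₁ = 1, and A a bounded operator on H with ‖A‖ = μ. If |tr(A T)| = μ, then writing the singular value decomposition T = Σ_j λ_j ⟨·, φ_j⟩ ψ_j with λ_j > 0, Σ λ_j = 1, and (φ_j), (ψ_j) orthonormal families, one has ‖A ψ_j‖ = μ for every j. -/
open scoped InnerProductSpace ComplexInnerProductSpace

/-- Alignment condition: if a trace-class operator `T` with singular value decomposition
`T = Σ_j l j ⟨·, φ j⟩ ψ j` (with `l j > 0`, `Σ l j = 1`, `(φ j)`, `(ψ j)` orthonormal)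
pairs with a bounded operator `A` of norm `μ` so that `|tr (A T)| = μ`
(where `tr (A T) = Σ_j l j ⟪φ j, A (ψ j)⟫`), then `A` attains its norm on every `ψ j`. -/
theorem stmt3 {H : Type*} [NormedAddCommGroup H] [InnerProductSpace ℂ H] [CompleteSpace H]
    {ι : Type*} (A : H →L[ℂ] H) (μ : ℝ) (hμ : ‖A‖ = μ)
    (l : ι → ℝ) (φ ψ : ι → H) (hφ : Orthonormal ℂ φ) (hψ : Orthonormal ℂ ψ)
    (hl : ∀ j, 0 < l j) (hsum : HasSum l 1)
    (tr : ℂ) (htr : HasSum (fun j => (l j : ℂ) * ⟪φ j, A (ψ j)⟫_ℂ) tr)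
    (habs : ‖tr‖ = μ) :
    ∀ j, ‖A (ψ j)‖ = μ := by
  have hμ0 : 0 ≤ μ := hμ ▸ norm_nonneg A
  have hψle : ∀ j, ‖A (ψ j)‖ ≤ μ := by
    intro j
    calc ‖A (ψ j)‖ ≤ ‖A‖ * ‖ψ j‖ := A.le_opNorm _
    _ = μ := by rw [hψ.1 j, hμ, mul_one]
  set f : ι → ℝ := fun j => l j * ‖A (ψ j)‖ with hf
  set g : ι → ℝ := fun j => l j * μ with hg
  have hfg : ∀ j, f j ≤ g j := fun j =>
    mul_le_mul_of_nonneg_left (hψle j) (hl j).le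
  have hgsum : HasSum g μ := by simpa using hsum.mul_right μ
  have hSg : Summable g := hgsum.summable
  have hSf : Summable f := hSg.of_nonneg_of_le
    (fun j => mul_nonneg (hl j).le (norm_nonneg _)) hfg
  -- norm of each term of the trace sum is ≤ f j
  have hterm : ∀ j, ‖(l j : ℂ) * ⟪φ j, A (ψ j)⟫_ℂ‖ ≤ f j := by
    intro j
    rw [norm_mul, Complex.norm_real, Real.norm_of_nonneg (hl j).le]
    refine mul_le_mul_of_nonneg_left ?_ (hl j).le
    calc ‖⟪φ j, A (ψ j)⟫_ℂ‖ ≤ ‖φ j‖ * ‖A (ψ j)‖ := norm_inner_le_norm _ _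
    _ = ‖A (ψ j)‖ := by rw [hφ.1 j, one_mul]
  have hlow : μ ≤ ∑' j, f j := by
    calc μ = ‖tr‖ := habs.symm
    _ = ‖∑' j, (l j : ℂ) * ⟪φ j, A (ψ j)⟫_ℂ‖ := by rw [htr.tsum_eq]
    _ ≤ ∑' j, ‖(l j : ℂ) * ⟪φ j, A (ψ j)⟫_ℂ‖ := norm_tsum_le_tsum_norm
        (hSf.of_nonneg_of_le (fun j => norm_nonneg _) hterm)
    _ ≤ ∑' j, f j := Summable.tsum_le_tsum hterm
        (hSf.of_nonneg_of_le (fun j => norm_nonneg _) hterm) hSf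
  have htsumg : ∑' j, g j = μ := hgsum.tsum_eq
  have heq : ∑' j, f j = ∑' j, g j := by
    refine le_antisymm (Summable.tsum_le_tsum hfg hSf hSg) ?_
    rw [htsumg]; exact hlow
  intro j
  by_contra hne
  have hlt : f j < g j := lt_of_le_of_ne (hfg j) (by
    intro h
    exact hne (mul_left_cancel₀ (hl j).ne' h))
  exact absurd heq (ne_of_lt (Summable.tsum_lt_tsum hfg hlt hSf hSg))
end

section
/- Let H = ℓ²(ℕ) and T trace class on H with tr(A T) = 0 for every causal bounded operator A. If in addition tr(A T*) = 0 for all causal bounded A, then tr(T* T) = 0 and hence T = 0. -/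
open scoped InnerProductSpace ComplexInnerProductSpace

noncomputable section

/-- The Hilbert space `ℓ²(ℕ)`. -/
abbrev L2 : Type := lp (fun _ : ℕ => ℂ) 2

/-- The standard orthonormal basis vectors of `ℓ²`. -/
def e (i : ℕ) : L2 := lp.single 2 i 1

/-- Truncation projection onto the first `n+1` coordinates. -/
def Pn (n : ℕ) : L2 →L[ℂ] L2 :=
  ∑ i ∈ Finset.range (n + 1), (innerSL ℂ (e i)).smulRight (e i)

/-- Causal (lower-triangular) bounded operators. -/
def Causal (Q : L2 →L[ℂ] L2) : Prop :=
  ∀ n, Pn n ∘L Q ∘L Pn n = Pn n ∘L Q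

lemma inner_e_left (i : ℕ) (x : L2) : ⟪e i, x⟫_ℂ = x i := by
  simp [e, lp.inner_single_left]

lemma e_apply (i j : ℕ) : (e i : ∀ _ : ℕ, ℂ) j = if j = i then 1 else 0 := by
  by_cases h : j = i
  · subst h; simp [e, lp.single_apply_self]
  · simp [e, lp.single_apply_ne 2 i _ h, h]

lemma inner_e_e (j i : ℕ) : ⟪e j, e i⟫_ℂ = if j = i then 1 else 0 := by
  rw [inner_e_left, e_apply]

lemma Pn_apply (n : ℕ) (x : L2) :
    Pn n x = ∑ i ∈ Finset.range (n + 1), ⟪e i, x⟫_ℂ • e i := by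
  simp [Pn, ContinuousLinearMap.sum_apply]

lemma Pn_e (n i : ℕ) : Pn n (e i) = if i ≤ n then e i else 0 := by
  rw [Pn_apply]
  have : ∀ j, ⟪e j, e i⟫_ℂ = if j = i then 1 else 0 := fun j => by
    rw [inner_e_left, e_apply]
  simp only [this, ite_smul, one_smul, zero_smul]
  rw [Finset.sum_ite_eq' (Finset.range (n+1)) i (fun j => e j)]
  simp [Nat.lt_succ_iff]

lemma inner_e_Pn (n j : ℕ) (x : L2) :
    ⟪e j, Pn n x⟫_ℂ = if j ≤ n then ⟪e j, x⟫_ℂ else 0 := by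
  rw [Pn_apply, inner_sum]
  have : ∀ i, ⟪e j, ⟪e i, x⟫_ℂ • e i⟫_ℂ = if j = i then ⟪e i, x⟫_ℂ else 0 := by
    intro i
    rw [inner_smul_right, inner_e_e]
    split_ifs with h
    · subst h; simp
    · simp
  simp only [this]
  rw [Finset.sum_ite_eq (Finset.range (n+1)) j (fun i => ⟪e i, x⟫_ℂ)]
  simp [Nat.lt_succ_iff]

def Aop (i j : ℕ) : L2 →L[ℂ] L2 := (innerSL ℂ (e j)).smulRight (e i)

lemma Aop_apply (i j : ℕ) (x : L2) : Aop i j x = ⟪e j, x⟫_ℂ • e i := rfl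

lemma Aop_causal {i j : ℕ} (h : j ≤ i) : Causal (Aop i j) := by
  intro n
  refine ContinuousLinearMap.ext fun x => ?_
  simp only [ContinuousLinearMap.comp_apply, Aop_apply, map_smul, Pn_e, inner_e_Pn]
  by_cases hi : i ≤ n
  · rw [if_pos hi, if_pos (le_trans h hi)]
  · rw [if_neg hi]
    simp
lemma trace_Aop (T : L2 →L[ℂ] L2) (i j : ℕ) :
    (∑' k, ⟪e k, Aop i j (T (e k))⟫_ℂ) = ⟪e j, T (e i)⟫_ℂ := by
  have hk : ∀ k, ⟪e k, Aop i j (T (e k))⟫_ℂ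
      = if k = i then ⟪e j, T (e k)⟫_ℂ else 0 := by
    intro k
    rw [Aop_apply, inner_smul_right, inner_e_e]
    split_ifs with h
    · subst h; simp
    · simp
  rw [tsum_eq_single i (fun k hk' => by rw [hk k, if_neg hk'])]
  rw [hk i, if_pos rfl]

/-- If both a trace-class operator `T` and its adjoint `T*` annihilate all causal
bounded operators under trace duality, then `tr (T* T) = 0` and hence `T = 0`.
(Trace-class is encoded by absolute summability of the diagonal of `A T` and of
`A T*` for every bounded `A`.) -/
theorem stmt8 (T : L2 →L[ℂ] L2)
    (htc : ∀ A : L2 →L[ℂ] L2, Summable fun i => ⟪e i, A (T (e i))⟫_ℂ)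
    (htc' : ∀ A : L2 →L[ℂ] L2,
      Summable fun i => ⟪e i, A ((ContinuousLinearMap.adjoint T) (e i))⟫_ℂ)
    (h1 : ∀ A : L2 →L[ℂ] L2, Causal A → (∑' i, ⟪e i, A (T (e i))⟫_ℂ) = 0)
    (h2 : ∀ A : L2 →L[ℂ] L2, Causal A →
      (∑' i, ⟪e i, A ((ContinuousLinearMap.adjoint T) (e i))⟫_ℂ) = 0) :
    (∑' i, ⟪e i, (ContinuousLinearMap.adjoint T) (T (e i))⟫_ℂ) = 0 ∧ T = 0 := by
  -- entries of T vanish below the diagonal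
  have hT : ∀ i j : ℕ, j ≤ i → ⟪e j, T (e i)⟫_ℂ = 0 := by
    intro i j h
    rw [← trace_Aop T i j]
    exact h1 _ (Aop_causal h)
  have hTs : ∀ i j : ℕ, j ≤ i →
      ⟪e j, (ContinuousLinearMap.adjoint T) (e i)⟫_ℂ = 0 := by
    intro i j h
    rw [← trace_Aop (ContinuousLinearMap.adjoint T) i j]
    exact h2 _ (Aop_causal h)
  -- all entries of T* vanish
  have hTall : ∀ j k : ℕ, ⟪e k, (ContinuousLinearMap.adjoint T) (e j)⟫_ℂ = 0 := by
    intro j k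
    rcases le_total k j with h | h
    · exact hTs j k h
    · rw [ContinuousLinearMap.adjoint_inner_right, ← inner_conj_symm, hT k j h, map_zero]
  have hTse : ∀ j : ℕ, (ContinuousLinearMap.adjoint T) (e j) = 0 := by
    intro j
    apply lp.ext
    funext k
    have := hTall j k
    rw [inner_e_left] at this
    simpa using this
  have hT0 : T = 0 := by
    ext x j
    have : ⟪e j, T x⟫_ℂ = 0 := by
      rw [← ContinuousLinearMap.adjoint_inner_left, hTse j, inner_zero_left]
    rw [inner_e_left] at this
    simpa using this
  refine ⟨?_, hT0⟩
  simp [hT0]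
end
end

section
/- Let H be a Hilbert space and T a trace-class operator with singular value decomposition T = Σ_j λ_j ⟨·, φ_j⟩ ψ_j (λ_j > 0, (φ_j), (ψ_j) orthonormal, Σ λ_j = ‖T‖₁). Let A be a bounded operator with ‖A‖ = μ and tr(AT) = μ ‖T‖₁ (real and positive). Then A ψ_j = μ φ_j for every j; consequently A T = μ (T*T)^{1/2}. -/
open scoped InnerProductSpace ComplexInnerProductSpace

/-- Equality in the trace duality pairing forces alignment. Let `T` be trace class with
singular value decomposition `T x = Σ_j l j ⟪φ j, x⟫ ψ j` (`l j > 0`, `(φ j)`, `(ψ j)`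
orthonormal, `Σ_j l j = ‖T‖₁ = t₁`), and let `A` be bounded with `‖A‖ = μ` and
`tr (A T) = Σ_j l j ⟪φ j, A (ψ j)⟫ = μ t₁` (real and positive). Then `A ψ_j = μ φ_j`
for every `j`, and consequently `A T = μ (T*T)^{1/2}`, i.e.
`A (T x) = Σ_j μ l j ⟪φ j, x⟫ φ j` for every `x`. -/
theorem stmt18 {H : Type*} [NormedAddCommGroup H] [InnerProductSpace ℂ H] [CompleteSpace H]
    {ι : Type*} (T A : H →L[ℂ] H) (μ t₁ : ℝ) (hμpos : 0 < μ) (ht₁pos : 0 < t₁)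
    (l : ι → ℝ) (φ ψ : ι → H) (hφ : Orthonormal ℂ φ) (hψ : Orthonormal ℂ ψ)
    (hl : ∀ j, 0 < l j) (hsum : HasSum l t₁)
    (hT : ∀ x, HasSum (fun j => l j • (⟪φ j, x⟫_ℂ • ψ j)) (T x))
    (hA : ‖A‖ = μ)
    (htr : HasSum (fun j => (l j : ℂ) * ⟪φ j, A (ψ j)⟫_ℂ) ((μ * t₁ : ℝ) : ℂ)) :
    (∀ j, A (ψ j) = (μ : ℂ) • φ j) ∧
      (∀ x, HasSum (fun j => (μ * l j) • (⟪φ j, x⟫_ℂ • φ j)) (A (T x))) := by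
  have hψn : ∀ j, ‖ψ j‖ = 1 := hψ.1
  have hφn : ∀ j, ‖φ j‖ = 1 := hφ.1
  have hAle : ∀ j, ‖A (ψ j)‖ ≤ μ := fun j => by
    calc ‖A (ψ j)‖ ≤ ‖A‖ * ‖ψ j‖ := A.le_opNorm _
    _ = μ := by rw [hA, hψn j, mul_one]
  have hre_le : ∀ j, (⟪φ j, A (ψ j)⟫_ℂ).re ≤ μ := by
    intro j
    have h1 := re_inner_le_norm (𝕜 := ℂ) (φ j) (A (ψ j))
    rw [RCLike.re_to_complex] at h1
    rw [hφn j, one_mul] at h1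
    exact h1.trans (hAle j)
  have hre : HasSum (fun j => l j * (⟪φ j, A (ψ j)⟫_ℂ).re) (μ * t₁) := by
    have h1 := ((Complex.hasSum_iff _ _).mp htr).1
    simpa using h1
  have hμsum : HasSum (fun j => μ * l j) (μ * t₁) := hsum.mul_left μ
  have hzero : HasSum (fun j => μ * l j - l j * (⟪φ j, A (ψ j)⟫_ℂ).re) 0 := by
    simpa using hμsum.sub hre
  have hnn : ∀ j, 0 ≤ μ * l j - l j * (⟪φ j, A (ψ j)⟫_ℂ).re := by
    intro j
    have h1 := mul_le_mul_of_nonneg_left (hre_le j) (hl j).le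
    nlinarith
  have heq : ∀ j, (⟪φ j, A (ψ j)⟫_ℂ).re = μ := by
    intro j
    have h0 := (hasSum_zero_iff_of_nonneg hnn).mp hzero
    have h1 : μ * l j - l j * (⟪φ j, A (ψ j)⟫_ℂ).re = 0 := congrFun h0 j
    have h2 := hl j
    nlinarith
  have key : ∀ j, A (ψ j) = (μ : ℂ) • φ j := by
    intro j
    have hns := norm_sub_sq (𝕜 := ℂ) (A (ψ j)) ((μ : ℂ) • φ j)
    have hinner : RCLike.re (⟪A (ψ j), (μ : ℂ) • φ j⟫_ℂ) = μ * μ := by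
      rw [inner_smul_right]
      have h1 : ⟪A (ψ j), φ j⟫_ℂ = starRingEnd ℂ ⟪φ j, A (ψ j)⟫_ℂ :=
        (inner_conj_symm _ _).symm
      simp only [RCLike.re_to_complex, h1, Complex.mul_re, Complex.ofReal_re,
        Complex.ofReal_im, Complex.conj_re, Complex.conj_im, heq j]
      ring
    have hnorm2 : ‖(μ : ℂ) • φ j‖ = μ := by
      rw [norm_smul, hφn j, mul_one, Complex.norm_real, Real.norm_eq_abs,
        abs_of_pos hμpos]
    have hsq : ‖A (ψ j) - (μ : ℂ) • φ j‖ ^ 2 ≤ 0 := by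
      rw [hns, hinner, hnorm2]
      have h1 := hAle j
      have h2 := norm_nonneg (A (ψ j))
      nlinarith
    have hsq0 : ‖A (ψ j) - (μ : ℂ) • φ j‖ = 0 := by
      nlinarith [norm_nonneg (A (ψ j) - (μ : ℂ) • φ j)]
    have := norm_eq_zero.mp hsq0
    exact sub_eq_zero.mp this
  refine ⟨key, fun x => ?_⟩
  have h2 := A.hasSum (hT x)
  have hterm : ∀ j, A (l j • (⟪φ j, x⟫_ℂ • ψ j)) = (μ * l j) • (⟪φ j, x⟫_ℂ • φ j) := by
    intro j
    rw [A.map_smul_of_tower, A.map_smul, key j]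
    match_scalars
    simp only [Complex.coe_algebraMap]
    ring
  simp only [hterm] at h2
  exact h2
end
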